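/- Let p be a prime and N ≥ 2 an integer with p ≤ N. If v_p(H_N − 1) > 0, then N ≥ 4p. -/

import Mathlib

/-- The `n`-th harmonic number `H_n = ∑_{i=1}^n 1/i`, as a rational number. -/
def H (n : ℕ) : ℚ := ∑ i ∈ Finset.range n, (1 : ℚ) / (i + 1)

/-!
Split `H_N - 1 = p⁻¹ H_{⌊N/p⌋} + R`, where `R` collects `-1` and the terms `1/i` with `p ∤ i`,
so that `v_p(R) ≥ 0`. If `v_p(H_{⌊N/p⌋}) ≤ 0`, the first summand has negative valuation and
dominates, so `v_p(H_N - 1) < 0`. For `N < 4p` we have `⌊N/p⌋ ∈ {1, 2, 3}`, and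
`H_1 = 1`, `H_2 = 3/2`, `H_3 = 11/6` have `v_p ≤ 0` except for `(p, ⌊N/p⌋) = (3, 2)` and
`(11, 3)`; the remaining values `6 ≤ N ≤ 8` and `33 ≤ N ≤ 43` are checked by computation.
-/

open Finset

theorem H_eq_harmonic : H = harmonic := by
  funext n
  simp [H, harmonic, one_div]

theorem Nat.Icc_filter_dvd_eq_image {p : ℕ} (hp : 0 < p) (N : ℕ) :
    {i ∈ Icc 1 N | p ∣ i} = (Icc 1 (N / p)).image (p * ·) := by
  ext i
  simp only [mem_filter, mem_Icc, mem_image]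
  constructor
  · rintro ⟨⟨hi1, hiN⟩, j, rfl⟩
    exact ⟨j, ⟨Nat.pos_of_mul_pos_left hi1, (Nat.le_div_iff_mul_le hp).2 (by linarith)⟩, rfl⟩
  · rintro ⟨j, ⟨hj1, hjN⟩, rfl⟩
    have := (Nat.le_div_iff_mul_le hp).1 hjN
    exact ⟨⟨Nat.one_le_iff_ne_zero.2 (by positivity), by linarith⟩, dvd_mul_right p j⟩

theorem harmonic_eq_inv_mul_harmonic_div_add {p : ℕ} (hp : 0 < p) (N : ℕ) :
    harmonic N = (p : ℚ)⁻¹ * harmonic (N / p) + ∑ i ∈ Icc 1 N with ¬ p ∣ i, (i : ℚ)⁻¹ := by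
  rw [harmonic_eq_sum_Icc, ← sum_filter_add_sum_filter_not _ (p ∣ ·),
    Nat.Icc_filter_dvd_eq_image hp, sum_image (fun _ _ _ _ h => Nat.eq_of_mul_eq_mul_left hp h),
    harmonic_eq_sum_Icc, mul_sum]
  simp only [Nat.cast_mul, mul_inv]

section padicValRat

variable {p : ℕ} [Fact p.Prime]

theorem padicValRat_add_nonneg {q r : ℚ} (hq : 0 ≤ padicValRat p q) (hr : 0 ≤ padicValRat p r) :
    0 ≤ padicValRat p (q + r) := by
  rcases eq_or_ne (q + r) 0 with hqr | hqr
  · simp [hqr]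
  · exact (le_min hq hr).trans (padicValRat.min_le_padicValRat_add hqr)

theorem padicValRat_sum_nonneg {ι : Type*} {s : Finset ι} {f : ι → ℚ}
    (hf : ∀ i ∈ s, 0 ≤ padicValRat p (f i)) : 0 ≤ padicValRat p (∑ i ∈ s, f i) := by
  classical
  induction s using Finset.induction_on with
  | empty => simp
  | insert a s ha ih =>
    rw [sum_insert ha]
    exact padicValRat_add_nonneg (hf a (mem_insert_self a s))
      (ih fun i hi => hf i (mem_insert_of_mem hi))

theorem padicValRat_add_eq_left_of_lt {q r : ℚ} (hq : q ≠ 0)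
    (h : padicValRat p q < padicValRat p r) : padicValRat p (q + r) = padicValRat p q := by
  rcases eq_or_ne r 0 with rfl | hr
  · simp
  have hqr : q + r ≠ 0 := by
    intro hqr
    rw [eq_neg_of_add_eq_zero_left hqr, padicValRat.neg] at h
    exact lt_irrefl _ h
  exact padicValRat.add_eq_of_lt hqr hq hr h

end padicValRat

theorem padicValRat_nonpos_of_not_dvd_num {p : ℕ} {q : ℚ} (h : ¬ (p : ℤ) ∣ q.num) :
    padicValRat p q ≤ 0 := by
  rw [padicValRat_def, padicValInt.eq_zero_of_not_dvd h]
  simp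

theorem padicValRat_harmonic_sub_one_neg {p N : ℕ} [Fact p.Prime] (hpN : p ≤ N)
    (hk : padicValRat p (harmonic (N / p)) ≤ 0) : padicValRat p (harmonic N - 1) < 0 := by
  have hp := (Fact.out : p.Prime).pos
  have hH : harmonic (N / p) ≠ 0 :=
    (harmonic_pos (Nat.div_pos hpN hp).ne').ne'
  have hT : padicValRat p ((p : ℚ)⁻¹ * harmonic (N / p)) < 0 := by
    rw [padicValRat.mul (by positivity) hH, padicValRat.inv, padicValRat.self
      (Fact.out : p.Prime).one_lt]
    omega
  have hR : 0 ≤ padicValRat p (∑ i ∈ Icc 1 N with ¬ p ∣ i, (i : ℚ)⁻¹ - 1) := by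
    rw [sub_eq_add_neg]
    refine padicValRat_add_nonneg (padicValRat_sum_nonneg fun i hi => ?_) (by simp)
    rw [padicValRat.inv, padicValRat.of_nat,
      padicValNat.eq_zero_of_not_dvd (mem_filter.1 hi).2]
    simp
  rw [harmonic_eq_inv_mul_harmonic_div_add hp, add_sub_assoc,
    padicValRat_add_eq_left_of_lt (mul_ne_zero (by positivity) hH) (hT.trans_le hR)]
  exact hT

theorem padicValRat_harmonic_nonpos_of_le_three {p k : ℕ} (hp : p.Prime) (hk : k ≤ 3)
    (hexc : ¬ ((p = 3 ∧ k = 2) ∨ (p = 11 ∧ k = 3))) : padicValRat p (harmonic k) ≤ 0 := by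
  have not_dvd_prime : ∀ q : ℕ, q.Prime → p ≠ q → ¬ (p : ℤ) ∣ q := fun q hq hpq h =>
    hpq ((Nat.prime_dvd_prime_iff_eq hp hq).1 (Int.natCast_dvd_natCast.1 h))
  interval_cases k
  · simp
  · simp
  · have hnum : (harmonic 2).num = 3 := by decide +kernel
    exact padicValRat_nonpos_of_not_dvd_num
      (hnum ▸ not_dvd_prime 3 Nat.prime_three (by tauto))
  · have hnum : (harmonic 3).num = 11 := by decide +kernel
    exact padicValRat_nonpos_of_not_dvd_num
      (hnum ▸ not_dvd_prime 11 (by norm_num) (by tauto))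

theorem not_three_dvd_num_harmonic_sub_one :
    ∀ N ∈ Icc 6 8, ¬ (3 : ℤ) ∣ (harmonic N - 1).num := by
  decide +kernel

theorem not_eleven_dvd_num_harmonic_sub_one :
    ∀ N ∈ Icc 33 43, ¬ (11 : ℤ) ∣ (harmonic N - 1).num := by
  decide +kernel

theorem vp_harmonic_sub_one_pos_imp_four_p_general (p N : ℕ) (hp : p.Prime)
    (hpN : p ≤ N) (h : 0 < padicValRat p (H N - 1)) : 4 * p ≤ N := by
  have := Fact.mk hp
  rw [H_eq_harmonic] at h
  by_contra! hN
  have hk : N / p ≤ 3 := Nat.lt_succ_iff.1 (Nat.div_lt_of_lt_mul (by linarith))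
  by_cases hexc : (p = 3 ∧ N / p = 2) ∨ (p = 11 ∧ N / p = 3)
  · refine h.not_ge (padicValRat_nonpos_of_not_dvd_num ?_)
    rcases hexc with ⟨rfl, hk2⟩ | ⟨rfl, hk3⟩
    · exact not_three_dvd_num_harmonic_sub_one N (mem_Icc.2 (by omega))
    · exact not_eleven_dvd_num_harmonic_sub_one N (mem_Icc.2 (by omega))
  · exact h.not_gt (padicValRat_harmonic_sub_one_neg hpN
      (padicValRat_harmonic_nonpos_of_le_three hp hk hexc))

theorem vp_harmonic_sub_one_pos_imp_four_p (p N : ℕ) (hp : p.Prime) (hN : 2 ≤ N)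
    (hpN : p ≤ N) (h : 0 < padicValRat p (H N - 1)) : 4 * p ≤ N :=
  vp_harmonic_sub_one_pos_imp_four_p_general p N hp hpN h
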